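/- arXiv:1806.04032 — 4 statements merged into one kernel-verified Lean document; each statement's English description precedes it below -/
import Mathlib

section
/- Let x and y be compatible features on a finite set 𝒢, meaning their kernel composition P_{y∘x} equals P_z for some feature z. Then P_z is coarser than both: P[x] ≤ P[z] and P[y] ≤ P[z], i.e., for all G ∈ 𝒢, 𝒢_{x(G)} ⊆ 𝒢_{z(G)} and 𝒢_{y(G)} ⊆ 𝒢_{z(G)}. -/
open scoped Classical

/-- The microcanonical RRM transition kernel `P_x(g | gs)`. -/
noncomputable def mrrmKernel {Γ X : Type*} (x : Γ → X) (g gs : Γ) : ℝ :=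
  if x g = x gs then 1 / (Set.ncard {g' | x g' = x gs} : ℝ) else 0

/-- Kernel composition `P_{y∘x}(g | gs) = Σ_{g'} P_y(g|g') P_x(g'|gs)`. -/
noncomputable def compKernel {Γ X Y : Type*} [Fintype Γ] (y : Γ → Y) (x : Γ → X)
    (g gs : Γ) : ℝ :=
  ∑ g' : Γ, mrrmKernel y g g' * mrrmKernel x g' gs

lemma mrrmKernel_nonneg {Γ X : Type*} (x : Γ → X) (g gs : Γ) :
    0 ≤ mrrmKernel x g gs := by
  unfold mrrmKernel
  split
  · positivity
  · exact le_refl 0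

lemma mrrmKernel_pos {Γ X : Type*} [Fintype Γ] (x : Γ → X) {g gs : Γ}
    (h : x g = x gs) : 0 < mrrmKernel x g gs := by
  unfold mrrmKernel
  rw [if_pos h]
  have hpos : 0 < ({g' | x g' = x gs} : Set Γ).ncard :=
    (Set.ncard_pos (Set.toFinite _)).2 ⟨gs, rfl⟩
  have : (0 : ℝ) < (({g' | x g' = x gs} : Set Γ).ncard : ℝ) := by exact_mod_cast hpos
  positivity

lemma comp_pos_of_mid {Γ X Y : Type*} [Fintype Γ] (y : Γ → Y) (x : Γ → X)
    {g gm gs : Γ} (hy : y g = y gm) (hx : x gm = x gs) :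
    0 < compKernel y x g gs := by
  unfold compKernel
  refine Finset.sum_pos' (fun i _ => mul_nonneg (mrrmKernel_nonneg _ _ _) (mrrmKernel_nonneg _ _ _)) ?_
  exact ⟨gm, Finset.mem_univ _, mul_pos (mrrmKernel_pos y hy) (mrrmKernel_pos x hx)⟩

lemma z_eq_of_comp_pos {Γ Z : Type*} [Fintype Γ] (z : Γ → Z) {g gs : Γ}
    (h : 0 < mrrmKernel z g gs) : z g = z gs := by
  by_contra hne
  rw [mrrmKernel, if_neg hne] at h
  exact lt_irrefl 0 h

theorem stmt10 {Γ X Y Z : Type*} [Fintype Γ] (x : Γ → X) (y : Γ → Y) (z : Γ → Z)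
    (h : ∀ g gs : Γ, compKernel y x g gs = mrrmKernel z g gs) :
    (∀ g : Γ, {g' : Γ | x g' = x g} ⊆ {g' : Γ | z g' = z g}) ∧
    (∀ g : Γ, {g' : Γ | y g' = y g} ⊆ {g' : Γ | z g' = z g}) := by
  constructor
  · intro g g' hg'
    have hpos : 0 < compKernel y x g' g := comp_pos_of_mid y x rfl hg'
    rw [h] at hpos
    exact z_eq_of_comp_pos z hpos
  · intro g g' hg'
    have hpos : 0 < compKernel y x g' g := comp_pos_of_mid y x hg' rfl
    rw [h] at hpos
    exact z_eq_of_comp_pos z hpos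
end

section
/- Symmetry of conditional independence given a common coarsening: let x, y, z be features on a finite set 𝒢 with z coarser than both x and y (z is a function of x and of y). If P_{y|x}(y†|x(G*)) = P_{y|z}(y†|z(G*)) for all G* ∈ 𝒢 and all attained values y†, then P_{x|y}(x†|y(G*)) = P_{x|z}(x†|z(G*)) for all G* and attained values x†. -/
open scoped Classical

/-- Conditional probability `P_{u|v}(ud | vs) = Ω_{(ud,vs)} / Ω_{vs}`. -/
noncomputable def condProb {Γ V U : Type*} (u : Γ → U) (v : Γ → V) (ud : U) (vs : V) : ℝ :=
  (Set.ncard {g : Γ | u g = ud ∧ v g = vs} : ℝ) / (Set.ncard {g : Γ | v g = vs} : ℝ)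

theorem stmt15 {Γ X Y Z : Type*} [Fintype Γ] (x : Γ → X) (y : Γ → Y) (z : Γ → Z)
    (hzx : ∃ f : X → Z, ∀ g : Γ, z g = f (x g))
    (hzy : ∃ f : Y → Z, ∀ g : Γ, z g = f (y g))
    (h : ∀ (gs : Γ) (yd : Y), yd ∈ Set.range y →
      condProb y x yd (x gs) = condProb y z yd (z gs)) :
    ∀ (gs : Γ) (xd : X), xd ∈ Set.range x →
      condProb x y xd (y gs) = condProb x z xd (z gs) := by
  obtain ⟨f, hf⟩ := hzx
  obtain ⟨f', hf'⟩ := hzy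
  rintro gs xd ⟨g0, rfl⟩
  by_cases hc : f (x g0) = z gs
  · have hy := h g0 (y gs) ⟨gs, rfl⟩
    have hz0 : z g0 = z gs := by rw [hf g0, hc]
    rw [hz0] at hy
    have e1 : {g : Γ | y g = y gs ∧ z g = z gs} = {g : Γ | y g = y gs} := by
      ext g
      simp only [Set.mem_setOf_eq]
      exact ⟨fun h => h.1, fun h => ⟨h, by rw [hf' g, h, ← hf' gs]⟩⟩
    have e2 : {g : Γ | x g = x g0 ∧ z g = z gs} = {g : Γ | x g = x g0} := by
      ext g
      simp only [Set.mem_setOf_eq]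
      exact ⟨fun h => h.1, fun h => ⟨h, by rw [hf g, h, hc]⟩⟩
    have e3 : {g : Γ | x g = x g0 ∧ y g = y gs} = {g : Γ | y g = y gs ∧ x g = x g0} := by
      ext g; simp only [Set.mem_setOf_eq]; exact and_comm
    unfold condProb at hy ⊢
    rw [e1] at hy
    rw [e2, e3]
    have hB : (Set.ncard {g : Γ | x g = x g0} : ℝ) ≠ 0 := by
      have hne : ({g : Γ | x g = x g0} : Set Γ).Nonempty := ⟨g0, rfl⟩
      exact_mod_cast ((Set.ncard_pos (Set.toFinite _)).mpr hne).ne'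
    have hC : (Set.ncard {g : Γ | y g = y gs} : ℝ) ≠ 0 := by
      have hne : ({g : Γ | y g = y gs} : Set Γ).Nonempty := ⟨gs, rfl⟩
      exact_mod_cast ((Set.ncard_pos (Set.toFinite _)).mpr hne).ne'
    have hD : (Set.ncard {g : Γ | z g = z gs} : ℝ) ≠ 0 := by
      have hne : ({g : Γ | z g = z gs} : Set Γ).Nonempty := ⟨gs, rfl⟩
      exact_mod_cast ((Set.ncard_pos (Set.toFinite _)).mpr hne).ne'
    field_simp at hy ⊢
    linarith [hy]
  · have e1 : {g : Γ | x g = x g0 ∧ y g = y gs} = (∅ : Set Γ) := by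
      ext g
      simp only [Set.mem_setOf_eq, Set.mem_empty_iff_false, iff_false, not_and]
      intro hx hyy
      exact hc (by rw [← hx, ← hf g, hf' g, hyy, ← hf' gs])
    have e2 : {g : Γ | x g = x g0 ∧ z g = z gs} = (∅ : Set Γ) := by
      ext g
      simp only [Set.mem_setOf_eq, Set.mem_empty_iff_false, iff_false, not_and]
      intro hx hzz
      exact hc (by rw [← hx, ← hf g, hzz])
    unfold condProb
    rw [e1, e2, Set.ncard_empty]
    simp
end

section
/- Compatibility is equivalent to conditional independence given a common coarsening: for features x, y on a finite set 𝒢, the kernel composition P_{y∘x} is itself an MRRM kernel (i.e., equals P_z for some feature z) if and only if there exists a feature z coarser than both x and y such that P_{y|x}(y†|x(G*)) = P_{y|z}(y†|z(G*)) for all G* ∈ 𝒢 and all attained values y†; moreover in that case z may be taken so that P_z = P_{y∘x}. -/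
open scoped Classical

private lemma ncard_pos_real {Γ : Type*} [Fintype Γ] {s : Set Γ} (h : s.Nonempty) :
    (0:ℝ) < (s.ncard : ℝ) := by
  exact_mod_cast (Set.ncard_pos s.toFinite).mpr h

private lemma sum_ite_ncard {Γ : Type*} [Fintype Γ] (p : Γ → Prop) (c : ℝ) :
    (∑ g : Γ, if p g then c else 0) = (Set.ncard {g | p g} : ℝ) * c := by
  rw [← Finset.sum_filter, Finset.sum_const, nsmul_eq_mul]
  congr 2
  rw [Set.ncard_eq_toFinset_card']
  simp

private lemma compKernel_eq {Γ X Y : Type*} [Fintype Γ] (y : Γ → Y) (x : Γ → X) (g gs : Γ) :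
    compKernel y x g gs =
      (Set.ncard {g' | y g' = y g ∧ x g' = x gs} : ℝ) /
        ((Set.ncard {g' | y g' = y g} : ℝ) * (Set.ncard {g' | x g' = x gs} : ℝ)) := by
  unfold compKernel mrrmKernel
  have key : ∀ g' : Γ,
      (if y g = y g' then 1 / (Set.ncard {h | y h = y g'} : ℝ) else 0) *
        (if x g' = x gs then 1 / (Set.ncard {h | x h = x gs} : ℝ) else 0) =
      (if y g' = y g ∧ x g' = x gs then
        1 / ((Set.ncard {h | y h = y g} : ℝ) * (Set.ncard {h | x h = x gs} : ℝ)) else 0) := by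
    intro g'
    by_cases h1 : y g' = y g
    · have hset : {h | y h = y g'} = {h | y h = y g} := by ext h; simp [h1]
      by_cases h2 : x g' = x gs
      · rw [if_pos h1.symm, if_pos h2, if_pos ⟨h1, h2⟩, hset, one_div_mul_one_div]
      · rw [if_neg h2, mul_zero, if_neg (fun h => h2 h.2)]
    · rw [if_neg (fun h => h1 h.symm), zero_mul, if_neg (fun h => h1 h.1)]
  rw [Finset.sum_congr rfl (fun g' _ => key g'), ← Finset.sum_filter, Finset.sum_const,
    nsmul_eq_mul, mul_one_div]
  congr 2
  rw [Set.ncard_eq_toFinset_card', Set.toFinset_setOf]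

theorem stmt16 {Γ X Y : Type*} [Fintype Γ] (x : Γ → X) (y : Γ → Y) :
    (∃ z : Γ → Set Γ, ∀ g gs : Γ, compKernel y x g gs = mrrmKernel z g gs) ↔
    (∃ z : Γ → Set Γ,
      (∃ f : X → Set Γ, ∀ g : Γ, z g = f (x g)) ∧
      (∃ f : Y → Set Γ, ∀ g : Γ, z g = f (y g)) ∧
      (∀ (gs : Γ) (yd : Y), yd ∈ Set.range y →
        condProb y x yd (x gs) = condProb y z yd (z gs)) ∧
      (∀ g gs : Γ, mrrmKernel z g gs = compKernel y x g gs)) := by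
  constructor
  · rintro ⟨z, hk⟩
    -- positivity facts
    have hypos : ∀ g : Γ, (0:ℝ) < (Set.ncard {g' | y g' = y g} : ℝ) :=
      fun g => ncard_pos_real ⟨g, rfl⟩
    have hxpos : ∀ gs : Γ, (0:ℝ) < (Set.ncard {g' | x g' = x gs} : ℝ) :=
      fun gs => ncard_pos_real ⟨gs, rfl⟩
    have hzpos : ∀ gs : Γ, (0:ℝ) < (Set.ncard {g' | z g' = z gs} : ℝ) :=
      fun gs => ncard_pos_real ⟨gs, rfl⟩
    -- support characterization
    have key : ∀ g gs : Γ, z g = z gs ↔ ({g' | y g' = y g ∧ x g' = x gs} : Set Γ).Nonempty := by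
      intro g gs
      have hk0 := hk g gs
      rw [compKernel_eq] at hk0
      unfold mrrmKernel at hk0
      constructor
      · intro hz
        rw [if_pos hz] at hk0
        have hpos : (0:ℝ) < (Set.ncard {g' | y g' = y g ∧ x g' = x gs} : ℝ) := by
          rcases lt_or_eq_of_le (by positivity :
              (0:ℝ) ≤ (Set.ncard {g' | y g' = y g ∧ x g' = x gs} : ℝ)) with h | h
          · exact h
          · exfalso
            rw [← h, zero_div] at hk0
            have := one_div_pos.mpr (hzpos gs)
            linarith
        have : 0 < ({g' | y g' = y g ∧ x g' = x gs} : Set Γ).ncard := by exact_mod_cast hpos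
        exact (Set.ncard_pos (Set.toFinite _)).mp this
      · intro hne
        by_contra hz
        rw [if_neg hz] at hk0
        have hpos : (0:ℝ) < (Set.ncard {g' | y g' = y g ∧ x g' = x gs} : ℝ) :=
          ncard_pos_real hne
        have : (0:ℝ) < (Set.ncard {g' | y g' = y g ∧ x g' = x gs} : ℝ) /
            ((Set.ncard {g' | y g' = y g} : ℝ) * (Set.ncard {g' | x g' = x gs} : ℝ)) :=
          div_pos hpos (mul_pos (hypos g) (hxpos gs))
        linarith
    have hxf : ∀ a b : Γ, x a = x b → z a = z b := by
      intro a b h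
      exact (key a b).mpr ⟨a, rfl, h⟩
    have hyf : ∀ a b : Γ, y a = y b → z a = z b := by
      intro a b h
      exact (key a b).mpr ⟨b, h.symm, rfl⟩
    refine ⟨z, ?_, ?_, ?_, fun g gs => (hk g gs).symm⟩
    · refine ⟨fun xv => if h : ∃ g0, x g0 = xv then z h.choose else ∅, fun g => ?_⟩
      show z g = if h : ∃ g0, x g0 = x g then z h.choose else ∅
      rw [dif_pos (⟨g, rfl⟩ : ∃ g0, x g0 = x g)]
      exact (hxf _ g (Exists.choose_spec (⟨g, rfl⟩ : ∃ g0, x g0 = x g))).symm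
    · refine ⟨fun yv => if h : ∃ g0, y g0 = yv then z h.choose else ∅, fun g => ?_⟩
      show z g = if h : ∃ g0, y g0 = y g then z h.choose else ∅
      rw [dif_pos (⟨g, rfl⟩ : ∃ g0, y g0 = y g)]
      exact (hyf _ g (Exists.choose_spec (⟨g, rfl⟩ : ∃ g0, y g0 = y g))).symm
    · rintro gs yd ⟨g0, rfl⟩
      have hk0 := hk g0 gs
      rw [compKernel_eq] at hk0
      unfold mrrmKernel at hk0
      unfold condProb
      by_cases hcase : z g0 = z gs
      · rw [if_pos hcase] at hk0
        have hset : {g | y g = y g0 ∧ z g = z gs} = {g | y g = y g0} := by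
          ext g
          simp only [Set.mem_setOf_eq, and_iff_left_iff_imp]
          intro h
          exact (hyf g g0 h).trans hcase
        rw [hset]
        have h1 := hypos g0
        have h2 := hxpos gs
        have h3 := hzpos gs
        field_simp at hk0 ⊢
        linear_combination hk0
      · rw [if_neg hcase] at hk0
        have hN : (Set.ncard {g' | y g' = y g0 ∧ x g' = x gs} : ℝ) = 0 := by
          rcases div_eq_zero_iff.mp hk0 with h | h
          · exact h
          · exact absurd h (ne_of_gt (mul_pos (hypos g0) (hxpos gs)))
        have hset : {g | y g = y g0 ∧ z g = z gs} = (∅ : Set Γ) := by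
          ext g
          simp only [Set.mem_setOf_eq, Set.mem_empty_iff_false, iff_false, not_and]
          intro h hz
          exact hcase (((hyf g g0 h).symm.trans hz))
        rw [hset, hN]
        simp
  · rintro ⟨z, _, _, _, h4⟩
    exact ⟨z, fun g gs => (h4 g gs).symm⟩
end

section
/- Adapted refinements of compatible MRRMs are compatible: let x and y be compatible features on a finite set 𝒢 (P_{y∘x} = P_z is an MRRM with z = y∘x), and let f, g be arbitrary functions of the values of x and y respectively. Then the features (y, f∘x) and (x, g∘y) are compatible, and the kernel composition of their MRRMs equals P_{(z, f∘x, g∘y)}, the MRRM constraining simultaneously z, f(x), and g(y). -/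
open scoped Classical

noncomputable def cnt {Γ : Type*} [Fintype Γ] (p : Γ → Prop) : ℝ :=
  ((Finset.univ.filter p).card : ℝ)

section lemmas
variable {Γ : Type*} [Fintype Γ]

lemma cnt_congr {p q : Γ → Prop} (h : ∀ a, p a ↔ q a) : cnt p = cnt q :=
  congrArg cnt (funext fun a => propext (h a))

lemma cnt_ne {p : Γ → Prop} (a : Γ) (ha : p a) : cnt p ≠ 0 := by
  have : a ∈ Finset.univ.filter p := by simp [ha]
  have hpos : 0 < (Finset.univ.filter p).card := Finset.card_pos.2 ⟨a, this⟩
  simp only [cnt, ne_eq, Nat.cast_eq_zero]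
  omega

lemma cnt_eq_zero {p : Γ → Prop} (h : ∀ a, ¬ p a) : cnt p = 0 := by
  simp [cnt, Finset.filter_eq_empty_iff.2 (fun {a} _ => h a)]

lemma sum_ite_cnt (p : Γ → Prop) [DecidablePred p] (c : ℝ) :
    (∑ h : Γ, if p h then c else 0) = cnt p * c := by
  rw [← Finset.sum_filter, Finset.sum_const, nsmul_eq_mul]
  unfold cnt
  rw [Finset.filter_congr_decidable]
  congr!

lemma cnt_eq_sum (p : Γ → Prop) [DecidablePred p] :
    cnt p = ∑ h : Γ, if p h then (1 : ℝ) else 0 := by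
  rw [sum_ite_cnt, mul_one]

lemma ncard_cnt (p : Γ → Prop) : ((Set.ncard {a | p a} : ℕ) : ℝ) = cnt p := by
  simp [cnt, Set.ncard_eq_toFinset_card', Set.toFinset_setOf]

end lemmas

section kernels
variable {Γ X Y : Type*} [Fintype Γ]

lemma mrrm_eq (x : Γ → X) (g gs : Γ) :
    mrrmKernel x g gs = if x g = x gs then 1 / cnt (fun h => x h = x gs) else 0 := by
  rw [mrrmKernel, ncard_cnt]

lemma comp_eq (y : Γ → Y) (x : Γ → X) (g gs : Γ) :
    compKernel y x g gs = cnt (fun h => y h = y g ∧ x h = x gs) /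
      (cnt (fun h => y h = y g) * cnt (fun h => x h = x gs)) := by
  rw [compKernel]
  have : ∀ g' : Γ, mrrmKernel y g g' * mrrmKernel x g' gs =
      if y g' = y g ∧ x g' = x gs then
        1 / (cnt (fun h => y h = y g) * cnt (fun h => x h = x gs)) else 0 := by
    intro g'
    rw [mrrm_eq, mrrm_eq]
    have hcy : y g = y g' → cnt (fun h => y h = y g') = cnt (fun h => y h = y g) :=
      fun h1 => cnt_congr (fun a => by rw [h1])
    by_cases h1 : y g = y g' <;> by_cases h2 : x g' = x gs
    · rw [if_pos h1, if_pos h2, if_pos ⟨h1.symm, h2⟩, hcy h1, div_mul_div_comm, one_mul]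
    · rw [if_pos h1, if_neg h2, if_neg (fun hc => h2 hc.2), mul_zero]
    · rw [if_neg h1, zero_mul, if_neg (fun hc => h1 hc.1.symm)]
    · rw [if_neg h1, zero_mul, if_neg (fun hc => h1 hc.1.symm)]
  rw [Finset.sum_congr rfl (fun g' _ => this g'), sum_ite_cnt, mul_one_div]

lemma key (y : Γ → Y) (q : Y → Prop) (t : Γ → Prop) (w : Γ → Prop) (c : ℝ)
    (hfib : ∀ h : Γ, cnt (fun h' => y h' = y h ∧ w h') =
      if t h then cnt (fun h' => y h' = y h) * c else 0) :
    cnt (fun h => q (y h) ∧ w h) = cnt (fun h => t h ∧ q (y h)) * c := by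
  have hy0 : ∀ h : Γ, cnt (fun h' => y h' = y h) ≠ 0 := fun h => cnt_ne h rfl
  have hA : ∀ h : Γ, (if q (y h) then
      cnt (fun h' => y h' = y h ∧ w h') / cnt (fun h' => y h' = y h) else 0) =
      if t h ∧ q (y h) then c else 0 := by
    intro h
    rw [hfib h]
    by_cases hq : q (y h) <;> by_cases ht : t h <;>
      simp [hq, ht, mul_div_assoc, mul_div_cancel_left₀ _ (hy0 h)]
  have hB : ∀ h : Γ, (if q (y h) then
      cnt (fun h' => y h' = y h ∧ w h') / cnt (fun h' => y h' = y h) else 0) =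
      ∑ h' : Γ, if q (y h) ∧ y h' = y h ∧ w h' then
        1 / cnt (fun h'' => y h'' = y h) else 0 := by
    intro h
    by_cases hq : q (y h)
    · rw [if_pos hq, cnt_eq_sum (fun h' => y h' = y h ∧ w h'), Finset.sum_div]
      refine Finset.sum_congr rfl (fun h' _ => ?_)
      by_cases hc : y h' = y h ∧ w h' <;> simp [hc, hq]
    · simp [hq]
  have hinner : ∀ h' : Γ, (∑ h : Γ, if q (y h) ∧ y h' = y h ∧ w h' then
      1 / cnt (fun h'' => y h'' = y h) else 0) = if q (y h') ∧ w h' then 1 else 0 := by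
    intro h'
    by_cases hqw : q (y h') ∧ w h'
    · rw [if_pos hqw]
      have hterm : ∀ h : Γ, (if q (y h) ∧ y h' = y h ∧ w h' then
          1 / cnt (fun h'' => y h'' = y h) else 0) =
          if y h = y h' then 1 / cnt (fun h'' => y h'' = y h') else 0 := by
        intro h
        by_cases hy : y h = y h'
        · rw [if_pos hy, if_pos ⟨by rw [hy]; exact hqw.1, hy.symm, hqw.2⟩]
          have : cnt (fun h'' => y h'' = y h) = cnt (fun h'' => y h'' = y h') :=
            cnt_congr (fun a => by rw [hy])
          rw [this]
        · rw [if_neg hy, if_neg]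
          rintro ⟨_, h2, _⟩; exact hy h2.symm
      rw [Finset.sum_congr rfl (fun h _ => hterm h), sum_ite_cnt, mul_one_div,
        div_self (hy0 h')]
    · rw [if_neg hqw]
      refine Finset.sum_eq_zero (fun h _ => ?_)
      rw [if_neg]
      rintro ⟨h1, h2, h3⟩
      exact hqw ⟨by rw [h2]; exact h1, h3⟩
  have := calc
    cnt (fun h => t h ∧ q (y h)) * c
        = ∑ h : Γ, if t h ∧ q (y h) then c else 0 := (sum_ite_cnt _ c).symm
    _ = ∑ h : Γ, ∑ h' : Γ, (if q (y h) ∧ y h' = y h ∧ w h' then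
          1 / cnt (fun h'' => y h'' = y h) else 0) := by
        refine Finset.sum_congr rfl (fun h _ => ?_)
        rw [← hA h, hB h]
    _ = ∑ h' : Γ, ∑ h : Γ, (if q (y h) ∧ y h' = y h ∧ w h' then
          1 / cnt (fun h'' => y h'' = y h) else 0) := Finset.sum_comm
    _ = ∑ h' : Γ, if q (y h') ∧ w h' then 1 else 0 :=
        Finset.sum_congr rfl (fun h' _ => hinner h')
    _ = cnt (fun h => q (y h) ∧ w h) * 1 := sum_ite_cnt _ 1
  rw [mul_one] at this
  exact this.symm

end kernels

theorem stmt17 {Γ X Y Z A B : Type*} [Fintype Γ] (x : Γ → X) (y : Γ → Y) (z : Γ → Z)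
    (hz : ∀ g gs : Γ, compKernel y x g gs = mrrmKernel z g gs)
    (f : X → A) (k : Y → B) :
    (∀ g gs : Γ,
      compKernel (fun h : Γ => (y h, f (x h))) (fun h : Γ => (x h, k (y h))) g gs =
        mrrmKernel (fun h : Γ => (z h, f (x h), k (y h))) g gs) ∧
    (∀ g gs : Γ,
      compKernel (fun h : Γ => (x h, k (y h))) (fun h : Γ => (y h, f (x h))) g gs =
        mrrmKernel (fun h : Γ => (z h, f (x h), k (y h))) g gs) := by
  have fib : ∀ g gs : Γ, cnt (fun h => y h = y g ∧ x h = x gs)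
      = if z g = z gs then
          cnt (fun h => y h = y g) * cnt (fun h => x h = x gs) / cnt (fun h => z h = z gs)
        else 0 := by
    intro g gs
    have h1 := hz g gs
    rw [comp_eq, mrrm_eq] at h1
    have hy0 : cnt (fun h => y h = y g) ≠ 0 := cnt_ne g rfl
    have hx0 : cnt (fun h => x h = x gs) ≠ 0 := cnt_ne gs rfl
    by_cases hzz : z g = z gs
    · have hz0 : cnt (fun h => z h = z gs) ≠ 0 := cnt_ne gs rfl
      rw [if_pos hzz] at h1 ⊢
      field_simp at h1 ⊢
      linarith [h1]
    · rw [if_neg hzz] at h1 ⊢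
      exact (div_eq_zero_iff.1 h1).resolve_right (mul_ne_zero hy0 hx0)
  have hxz : ∀ g gs : Γ, x g = x gs → z g = z gs := by
    intro g gs hx
    by_contra hzz
    have h0 := fib g gs
    rw [if_neg hzz] at h0
    exact cnt_ne g ⟨rfl, hx⟩ h0
  have hyz : ∀ g gs : Γ, y g = y gs → z g = z gs := by
    intro g gs hy
    by_contra hzz
    have h0 := fib g gs
    rw [if_neg hzz] at h0
    exact cnt_ne gs ⟨hy.symm, rfl⟩ h0
  have P1 : ∀ (gs : Γ) (q : Y → Prop), cnt (fun h => q (y h) ∧ x h = x gs)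
      = cnt (fun h => z h = z gs ∧ q (y h)) *
        (cnt (fun h => x h = x gs) / cnt (fun h => z h = z gs)) := by
    intro gs q
    refine key y q (fun h => z h = z gs) (fun h => x h = x gs) _ (fun h => ?_)
    rw [fib h gs]
    by_cases hzz : z h = z gs
    · rw [if_pos hzz, if_pos hzz, mul_div_assoc]
    · rw [if_neg hzz, if_neg hzz]
  have P2 : ∀ (gs : Γ) (p : X → Prop), cnt (fun h => p (x h) ∧ y h = y gs)
      = cnt (fun h => z h = z gs ∧ p (x h)) *
        (cnt (fun h => y h = y gs) / cnt (fun h => z h = z gs)) := by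
    intro gs p
    refine key x p (fun h => z h = z gs) (fun h => y h = y gs) _ (fun h => ?_)
    have hc : cnt (fun h' => x h' = x h ∧ y h' = y gs)
        = cnt (fun h' => y h' = y gs ∧ x h' = x h) := cnt_congr (fun a => and_comm)
    rw [hc, fib gs h]
    by_cases hzz : z h = z gs
    · rw [if_pos hzz.symm, if_pos hzz]
      have h2 : cnt (fun h' => z h' = z h) = cnt (fun h' => z h' = z gs) :=
        cnt_congr (fun a => by rw [hzz])
      rw [h2]; ring
    · rw [if_neg (fun hc' => hzz hc'.symm), if_neg hzz]
  have P3 : ∀ (gs : Γ) (p : X → Prop) (q : Y → Prop),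
      cnt (fun h => z h = z gs ∧ p (x h) ∧ q (y h))
      = cnt (fun h => z h = z gs ∧ p (x h)) * cnt (fun h => z h = z gs ∧ q (y h))
        / cnt (fun h => z h = z gs) := by
    intro gs p q
    have hfib3 : ∀ h : Γ, cnt (fun h' => y h' = y h ∧ z h' = z gs ∧ p (x h'))
        = if z h = z gs then cnt (fun h' => y h' = y h) *
            (cnt (fun h'' => z h'' = z gs ∧ p (x h'')) / cnt (fun h'' => z h'' = z gs))
          else 0 := by
      intro h
      by_cases hzz : z h = z gs
      · rw [if_pos hzz]
        have e1 : cnt (fun h' => y h' = y h ∧ z h' = z gs ∧ p (x h'))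
            = cnt (fun h' => p (x h') ∧ y h' = y h) :=
          cnt_congr (fun a => ⟨fun ha => ⟨ha.2.2, ha.1⟩,
            fun ha => ⟨ha.2, (hyz a h ha.2).trans hzz, ha.1⟩⟩)
        rw [e1, P2 h p]
        have e2 : cnt (fun h' => z h' = z h) = cnt (fun h' => z h' = z gs) :=
          cnt_congr (fun a => by rw [hzz])
        have e3 : cnt (fun h' => z h' = z h ∧ p (x h'))
            = cnt (fun h' => z h' = z gs ∧ p (x h')) := cnt_congr (fun a => by rw [hzz])
        rw [e2, e3]; ring
      · rw [if_neg hzz]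
        exact cnt_eq_zero (fun a ha => hzz ((hyz a h ha.1).symm.trans ha.2.1))
    have hk := key y q (fun h => z h = z gs) (fun h => z h = z gs ∧ p (x h))
        (cnt (fun h'' => z h'' = z gs ∧ p (x h'')) / cnt (fun h'' => z h'' = z gs)) hfib3
    have e4 : cnt (fun h => z h = z gs ∧ p (x h) ∧ q (y h))
        = cnt (fun h => q (y h) ∧ z h = z gs ∧ p (x h)) := cnt_congr (fun a => by tauto)
    rw [e4, hk]; ring
  constructor
  · intro g gs
    rw [comp_eq, mrrm_eq]
    simp only [Prod.mk.injEq]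
    by_cases hw : z g = z gs ∧ f (x g) = f (x gs) ∧ k (y g) = k (y gs)
    · obtain ⟨hzgs, hfgs, hkgs⟩ := hw
      rw [if_pos ⟨hzgs, hfgs, hkgs⟩]
      have hnum : cnt (fun h => (y h = y g ∧ f (x h) = f (x g)) ∧ x h = x gs ∧ k (y h) = k (y gs))
          = cnt (fun h => y h = y g ∧ x h = x gs) :=
        cnt_congr (fun a => ⟨fun ha => ⟨ha.1.1, ha.2.1⟩,
          fun ha => ⟨⟨ha.1, (congrArg f ha.2).trans hfgs.symm⟩, ha.2, (congrArg k ha.1).trans hkgs⟩⟩)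
      have hd1 : cnt (fun h => y h = y g ∧ f (x h) = f (x g))
          = cnt (fun h => z h = z gs ∧ f (x h) = f (x gs)) *
            (cnt (fun h => y h = y g) / cnt (fun h => z h = z gs)) := by
        rw [cnt_congr (fun a => (and_comm : (y a = y g ∧ f (x a) = f (x g)) ↔ _)),
          P2 g (fun b => f b = f (x g))]
        have e2 : cnt (fun h => z h = z g ∧ f (x h) = f (x g))
            = cnt (fun h => z h = z gs ∧ f (x h) = f (x gs)) :=
          cnt_congr (fun a => by rw [hzgs, hfgs])
        have e3 : cnt (fun h => z h = z g) = cnt (fun h => z h = z gs) :=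
          cnt_congr (fun a => by rw [hzgs])
        rw [e2, e3]
      have hd2 : cnt (fun h => x h = x gs ∧ k (y h) = k (y gs))
          = cnt (fun h => z h = z gs ∧ k (y h) = k (y gs)) *
            (cnt (fun h => x h = x gs) / cnt (fun h => z h = z gs)) := by
        rw [cnt_congr (fun a => (and_comm : (x a = x gs ∧ k (y a) = k (y gs)) ↔ _)),
          P1 gs (fun b => k b = k (y gs))]
      have hW := P3 gs (fun b => f b = f (x gs)) (fun b => k b = k (y gs))
      rw [hnum, hd1, hd2, fib g gs, if_pos hzgs, hW]
      have hF : cnt (fun h => z h = z gs ∧ f (x h) = f (x gs)) ≠ 0 := cnt_ne gs ⟨rfl, rfl⟩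
      have hK : cnt (fun h => z h = z gs ∧ k (y h) = k (y gs)) ≠ 0 := cnt_ne gs ⟨rfl, rfl⟩
      have hNy : cnt (fun h => y h = y g) ≠ 0 := cnt_ne g rfl
      have hNx : cnt (fun h => x h = x gs) ≠ 0 := cnt_ne gs rfl
      have hNz : cnt (fun h => z h = z gs) ≠ 0 := cnt_ne gs rfl
      field_simp
    · rw [if_neg hw]
      have h0 : cnt (fun h => (y h = y g ∧ f (x h) = f (x g)) ∧ x h = x gs ∧ k (y h) = k (y gs)) = 0 :=
        cnt_eq_zero (fun a ha => hw ⟨(hyz g a ha.1.1.symm).trans (hxz a gs ha.2.1),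
          ha.1.2.symm.trans (congrArg f ha.2.1), (congrArg k ha.1.1).symm.trans ha.2.2⟩)
      rw [h0, zero_div]
  · intro g gs
    rw [comp_eq, mrrm_eq]
    simp only [Prod.mk.injEq]
    by_cases hw : z g = z gs ∧ f (x g) = f (x gs) ∧ k (y g) = k (y gs)
    · obtain ⟨hzgs, hfgs, hkgs⟩ := hw
      rw [if_pos ⟨hzgs, hfgs, hkgs⟩]
      have hnum : cnt (fun h => (x h = x g ∧ k (y h) = k (y g)) ∧ y h = y gs ∧ f (x h) = f (x gs))
          = cnt (fun h => y h = y gs ∧ x h = x g) :=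
        cnt_congr (fun a => ⟨fun ha => ⟨ha.2.1, ha.1.1⟩,
          fun ha => ⟨⟨ha.2, (congrArg k ha.1).trans hkgs.symm⟩, ha.1, (congrArg f ha.2).trans hfgs⟩⟩)
      have hd1 : cnt (fun h => x h = x g ∧ k (y h) = k (y g))
          = cnt (fun h => z h = z gs ∧ k (y h) = k (y gs)) *
            (cnt (fun h => x h = x g) / cnt (fun h => z h = z gs)) := by
        rw [cnt_congr (fun a => (and_comm : (x a = x g ∧ k (y a) = k (y g)) ↔ _)),
          P1 g (fun b => k b = k (y g))]
        have e2 : cnt (fun h => z h = z g ∧ k (y h) = k (y g))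
            = cnt (fun h => z h = z gs ∧ k (y h) = k (y gs)) :=
          cnt_congr (fun a => by rw [hzgs, hkgs])
        have e3 : cnt (fun h => z h = z g) = cnt (fun h => z h = z gs) :=
          cnt_congr (fun a => by rw [hzgs])
        rw [e2, e3]
      have hd2 : cnt (fun h => y h = y gs ∧ f (x h) = f (x gs))
          = cnt (fun h => z h = z gs ∧ f (x h) = f (x gs)) *
            (cnt (fun h => y h = y gs) / cnt (fun h => z h = z gs)) := by
        rw [cnt_congr (fun a => (and_comm : (y a = y gs ∧ f (x a) = f (x gs)) ↔ _)),
          P2 gs (fun b => f b = f (x gs))]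
      have hW := P3 gs (fun b => f b = f (x gs)) (fun b => k b = k (y gs))
      rw [hnum, fib gs g, if_pos hzgs.symm, hd1, hd2, hW]
      have e3 : cnt (fun h => z h = z g) = cnt (fun h => z h = z gs) :=
        cnt_congr (fun a => by rw [hzgs])
      rw [e3]
      have hF : cnt (fun h => z h = z gs ∧ f (x h) = f (x gs)) ≠ 0 := cnt_ne gs ⟨rfl, rfl⟩
      have hK : cnt (fun h => z h = z gs ∧ k (y h) = k (y gs)) ≠ 0 := cnt_ne gs ⟨rfl, rfl⟩
      have hNy : cnt (fun h => y h = y gs) ≠ 0 := cnt_ne gs rfl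
      have hNx : cnt (fun h => x h = x g) ≠ 0 := cnt_ne g rfl
      have hNz : cnt (fun h => z h = z gs) ≠ 0 := cnt_ne gs rfl
      field_simp
    · rw [if_neg hw]
      have h0 : cnt (fun h => (x h = x g ∧ k (y h) = k (y g)) ∧ y h = y gs ∧ f (x h) = f (x gs)) = 0 :=
        cnt_eq_zero (fun a ha => hw ⟨(hxz g a ha.1.1.symm).trans (hyz a gs ha.2.1),
          (congrArg f ha.1.1).symm.trans ha.2.2, ha.1.2.symm.trans (congrArg k ha.2.1)⟩)
      rw [h0, zero_div]
end
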